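/- Let G be a finite group, N a normal subgroup of G, θ an irreducible complex character of N, and P a projective representation of G associated with θ. Then for every element c of the centralizer C_G(N) the matrix P(c) is a scalar matrix: P(c) = ζ·I for some nonzero complex number ζ. -/

import Mathlib

/-!
Since `P` is multiplicative for products with elements of `N` on either side, `P c` commutes
with every `P n` when `c` centralizes `N`. An eigenspace of `P c` is then invariant under
`P(N)`, so by irreducibility it is the whole space (Schur's lemma), and the eigenvalue is nonzero
because `P c` is invertible.
-/

namespace Matrix

variable {K n ι : Type*} [Field K] [Fintype n]

theorem mulVec_mem_eigenspace_of_commute {A M : Matrix n n K} (h : Commute A M) {ζ : K}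
    {v : n → K} (hv : v ∈ Module.End.eigenspace A.mulVecLin ζ) :
    M *ᵥ v ∈ Module.End.eigenspace A.mulVecLin ζ := by
  have hlin : Commute A.mulVecLin M.mulVecLin := by
    simpa only [Commute, SemiconjBy, Module.End.mul_eq_comp, ← mulVecLin_mul] using
      congrArg mulVecLin h.eq
  exact Module.End.mapsTo_genEigenspace_of_comm hlin ζ 1 hv

theorem eq_smul_one_of_eigenspace_eq_top [DecidableEq n] {A : Matrix n n K} {ζ : K}
    (h : Module.End.eigenspace A.mulVecLin ζ = ⊤) : A = ζ • 1 := by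
  refine toLin'.injective (LinearMap.ext fun v => ?_)
  have hv : v ∈ Module.End.eigenspace A.mulVecLin ζ := h ▸ Submodule.mem_top
  simpa using Module.End.mem_eigenspace_iff.mp hv

theorem exists_eq_smul_one_of_forall_commute [DecidableEq n] [IsAlgClosed K] [Nonempty n]
    (ρ : ι → Matrix n n K)
    (hirr : ∀ W : Submodule K (n → K), (∀ i, ∀ v ∈ W, ρ i *ᵥ v ∈ W) → W = ⊥ ∨ W = ⊤)
    {A : Matrix n n K} (hA : ∀ i, Commute A (ρ i)) : ∃ ζ : K, A = ζ • 1 := by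
  obtain ⟨ζ, hζ⟩ := Module.End.exists_eigenvalue A.mulVecLin
  have hinv : ∀ i, ∀ v ∈ Module.End.eigenspace A.mulVecLin ζ,
      ρ i *ᵥ v ∈ Module.End.eigenspace A.mulVecLin ζ :=
    fun i _ hv => mulVec_mem_eigenspace_of_commute (hA i) hv
  exact ⟨ζ, eq_smul_one_of_eigenspace_eq_top ((hirr _ hinv).resolve_left hζ)⟩

end Matrix

theorem projectiveRep_scalar_on_centralizer_general
    {G : Type*} [Group G] (N : Subgroup G)
    (d : ℕ) (hd : 0 < d)
    (P : G → Matrix (Fin d) (Fin d) ℂ)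
    -- `P` is a projective representation of `G` with factor set `α` :
    (hPinv : ∀ g, IsUnit (P g))
    -- `P` is associated with `θ` :
    (hirr : ∀ W : Submodule ℂ (Fin d → ℂ),
      (∀ n : ↥N, ∀ v ∈ W, (P (n : G)).mulVec v ∈ W) → W = ⊥ ∨ W = ⊤)
    (hleft : ∀ (n : ↥N) (g : G), P ((n : G) * g) = P (n : G) * P g)
    (hright : ∀ (n : ↥N) (g : G), P (g * (n : G)) = P g * P (n : G)) :
    ∀ c ∈ Subgroup.centralizer (N : Set G),
      ∃ ζ : ℂ, ζ ≠ 0 ∧ P c = ζ • (1 : Matrix (Fin d) (Fin d) ℂ) := by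
  intro c hc
  have hcomm : ∀ n : ↥N, Commute (P c) (P n) := fun n => by
    rw [Commute, SemiconjBy, ← hright, ← hleft, hc n n.2]
  have : Nonempty (Fin d) := ⟨⟨0, hd⟩⟩
  obtain ⟨ζ, hζ⟩ := Matrix.exists_eq_smul_one_of_forall_commute (fun n : ↥N => P n) hirr hcomm
  refine ⟨ζ, fun hζ0 => ?_, hζ⟩
  simpa [hζ, hζ0] using hPinv c

/-- Let `N ⊴ G`, `θ` an irreducible complex character of `N`, and `P` a
projective representation of `G` associated with `θ`.  Then for every `c` in the centralizer
`C_G(N)` the matrix `P c` is a nonzero scalar multiple of the identity. -/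
theorem projectiveRep_scalar_on_centralizer
    {G : Type*} [Group G] [Finite G] (N : Subgroup G) (hN : N.Normal)
    (d : ℕ) (hd : 0 < d) (θ : ↥N → ℂ)
    (P : G → Matrix (Fin d) (Fin d) ℂ) (α : G → G → ℂ)
    -- `P` is a projective representation of `G` with factor set `α` :
    (hPinv : ∀ g, IsUnit (P g))
    (hα : ∀ g h, α g h ≠ 0)
    (hfac : ∀ g h, P g * P h = α g h • P (g * h))
    -- `P` is associated with `θ` :
    (hres : ∀ n m : ↥N, P ((n : G) * (m : G)) = P (n : G) * P (m : G))
    (hirr : ∀ W : Submodule ℂ (Fin d → ℂ),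
      (∀ n : ↥N, ∀ v ∈ W, (P (n : G)).mulVec v ∈ W) → W = ⊥ ∨ W = ⊤)
    (htr : ∀ n : ↥N, (P (n : G)).trace = θ n)
    (hleft : ∀ (n : ↥N) (g : G), P ((n : G) * g) = P (n : G) * P g)
    (hright : ∀ (n : ↥N) (g : G), P (g * (n : G)) = P g * P (n : G)) :
    ∀ c ∈ Subgroup.centralizer (N : Set G),
      ∃ ζ : ℂ, ζ ≠ 0 ∧ P c = ζ • (1 : Matrix (Fin d) (Fin d) ℂ) :=
  projectiveRep_scalar_on_centralizer_general N d hd P hPinv hirr hleft hright
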